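/- Define Φ_c(x) := ∫_1^∞ exp(−ct²) xᵗ dt for c > 0 and x ≥ 0. Then there is a constant K depending only on c such that for all x ≥ 1: exp((log x)²/(4c)) · exp(−(log K)²/(4c)) ≤ Φ_c(x). -/

import Mathlib

open MeasureTheory

/-- The Young-type function Φ_c(x) = ∫_1^∞ exp(-ct²) xᵗ dt. -/
noncomputable def PhiC (c x : ℝ) : ℝ :=
  ∫ t in Set.Ioi (1 : ℝ), Real.exp (-c * t ^ 2) * x ^ t

open Real Set

/- Completing the square, exp(-ct²) xᵗ = exp((log x)²/(4c)) · exp(-c(t - m)²) with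
m = log x / (2c) ≥ 0. The remaining Gaussian integral over (1, ∞) is at least exp(-4c), since
(1, ∞) contains a unit interval on which 0 ≤ t - m ≤ 2. Hence K = exp(4c) works. -/

lemma exp_neg_mul_sq_mul_rpow_eq {c x : ℝ} (hc : c ≠ 0) (hx : 0 < x) (t : ℝ) :
    exp (-c * t ^ 2) * x ^ t =
      exp (log x ^ 2 / (4 * c)) * exp (-c * (t - log x / (2 * c)) ^ 2) := by
  rw [rpow_def_of_pos hx, ← exp_add, ← exp_add]
  congr 1
  field_simp
  ring

lemma le_setIntegral_Ioc_of_le {f : ℝ → ℝ} {b k : ℝ} (hf : IntegrableOn f (Ioc b (b + 1)))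
    (hk : ∀ t ∈ Ioc b (b + 1), k ≤ f t) : k ≤ ∫ t in Ioc b (b + 1), f t := by
  simpa [volume_Ioc] using setIntegral_ge_of_const_le_real measurableSet_Ioc (by simp) hk hf

lemma exp_neg_mul_four_le_integral_Ioi_exp_neg_mul_sq {c a m : ℝ} (hc : 0 < c) (ham : a ≤ m + 1) :
    exp (-(4 * c)) ≤ ∫ t in Ioi a, exp (-c * (t - m) ^ 2) := by
  set b := max a m
  have hint : Integrable (fun t => exp (-c * (t - m) ^ 2)) :=
    (integrable_exp_neg_mul_sq hc).comp_sub_right m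
  have hsub : Ioc b (b + 1) ⊆ Ioi a := fun t ht => (le_max_left a m).trans_lt ht.1
  have hunit : exp (-(4 * c)) ≤ ∫ t in Ioc b (b + 1), exp (-c * (t - m) ^ 2) := by
    refine le_setIntegral_Ioc_of_le hint.integrableOn fun t ht => exp_le_exp.2 ?_
    have hmt : 0 ≤ t - m := by linarith [le_max_right a m, ht.1]
    have htm : t - m ≤ 2 := by linarith [max_le ham (by linarith : m ≤ m + 1), ht.2]
    have hsq : (t - m) ^ 2 ≤ 4 := by nlinarith
    nlinarith [mul_le_mul_of_nonneg_left hsq hc.le]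
  exact hunit.trans <| setIntegral_mono_set hint.integrableOn
    (Filter.Eventually.of_forall fun t => (exp_pos _).le) hsub.eventuallyLE

lemma PhiC_eq_mul_integral {c x : ℝ} (hc : c ≠ 0) (hx : 0 < x) :
    PhiC c x = exp (log x ^ 2 / (4 * c)) *
      ∫ t in Ioi 1, exp (-c * (t - log x / (2 * c)) ^ 2) := by
  simp_rw [PhiC, exp_neg_mul_sq_mul_rpow_eq hc hx, integral_const_mul]

/-- For every c > 0 there is a constant K (depending only on c) such that for all x ≥ 1,
exp((log x)²/(4c)) · exp(-(log K)²/(4c)) ≤ Φ_c(x). -/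
theorem stmt_14 (c : ℝ) (hc : 0 < c) :
    ∃ K : ℝ, 0 < K ∧ ∀ x : ℝ, 1 ≤ x →
      Real.exp ((Real.log x) ^ 2 / (4 * c)) * Real.exp (-(Real.log K) ^ 2 / (4 * c))
        ≤ PhiC c x := by
  refine ⟨exp (4 * c), exp_pos _, fun x hx => ?_⟩
  have hK : -log (exp (4 * c)) ^ 2 / (4 * c) = -(4 * c) := by
    rw [log_exp]
    field_simp
  have hm : 1 ≤ log x / (2 * c) + 1 := by
    linarith [div_nonneg (log_nonneg hx) (by linarith : 0 ≤ 2 * c)]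
  rw [hK, PhiC_eq_mul_integral hc.ne' (by linarith)]
  exact mul_le_mul_of_nonneg_left (exp_neg_mul_four_le_integral_Ioi_exp_neg_mul_sq hc hm)
    (exp_pos _).le
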